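/- Let U ∈ ℝ^{d×k} have orthonormal columns, ŵ ∈ ℝ^d, ε > 0, and x ∈ ℝ^d with label y ∈ {±1}. If there exists δ ∈ ℝ^d such that ‖UU^T δ‖∞ ≤ ε and ⟨y(x + UU^T δ), ŵ⟩ ≤ 0, then ⟨y·x, ŵ⟩ ≤ k·‖U‖_{∞,1}·‖U^T ŵ‖∞·ε. -/

import Mathlib

/-!
Write `p = UUᵀδ` for the perturbation. The adversarial inequality gives
`y⟨x, ŵ⟩ ≤ |⟨p, ŵ⟩|`, and since `UᵀU = 1` we have `⟨p, ŵ⟩ = ⟨Uᵀp, Uᵀŵ⟩`.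
Hölder's inequality bounds this by `‖Uᵀp‖₁ ‖Uᵀŵ‖∞`, and `‖Uᵀp‖₁ ≤ ‖U‖_{∞,1} ‖p‖∞ ≤ ‖U‖_{∞,1} ε`
by homogeneity of the supremum defining `‖U‖_{∞,1}`. The factor `k` is slack: `‖Uᵀŵ‖∞ ≤ k ‖Uᵀŵ‖∞`
also for `k = 0`, where `Uᵀŵ = 0`.
-/

open Matrix

/-- The `(∞,1)` operator norm `‖U‖_{∞,1} = sup { ‖Uᵀ v‖₁ : ‖v‖∞ ≤ 1 }`. -/
noncomputable def opNormInfOne {d k : ℕ} (U : Matrix (Fin d) (Fin k) ℝ) : ℝ :=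
  sSup {r : ℝ | ∃ v : Fin d → ℝ, ‖v‖ ≤ 1 ∧ r = ∑ j, |Uᵀ.mulVec v j|}

-- The norm on `ι → ℝ` is the sup norm, so this is Hölder's inequality for `(ℓ¹, ℓ∞)`.
theorem abs_dotProduct_le_sum_abs_mul_norm {ι : Type*} [Fintype ι] (z q : ι → ℝ) :
    |z ⬝ᵥ q| ≤ (∑ j, |z j|) * ‖q‖ :=
  calc |z ⬝ᵥ q| ≤ ∑ j, |z j| * |q j| := by
        simpa only [dotProduct, abs_mul] using
          Finset.abs_sum_le_sum_abs (fun j ↦ z j * q j) Finset.univ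
    _ ≤ ∑ j, |z j| * ‖q‖ := by
        gcongr with j
        exact norm_le_pi_norm q j
    _ = (∑ j, |z j|) * ‖q‖ := (Finset.sum_mul _ _ _).symm

theorem norm_le_card_mul_norm {ι E : Type*} [Fintype ι] [SeminormedAddGroup E] (q : ι → E) :
    ‖q‖ ≤ Fintype.card ι * ‖q‖ := by
  cases isEmpty_or_nonempty ι
  · simp [Subsingleton.elim q 0]
  · exact le_mul_of_one_le_left (norm_nonneg q) (by exact_mod_cast Fintype.card_pos)

namespace Matrix

variable {d k : ℕ} (U : Matrix (Fin d) (Fin k) ℝ)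

theorem bddAbove_opNormInfOne_set :
    BddAbove {r : ℝ | ∃ v : Fin d → ℝ, ‖v‖ ≤ 1 ∧ r = ∑ j, |(Uᵀ *ᵥ v) j|} := by
  refine ⟨∑ j, ∑ i, |Uᵀ j i|, ?_⟩
  rintro r ⟨v, hv, rfl⟩
  gcongr with j
  calc |(Uᵀ *ᵥ v) j| ≤ (∑ i, |Uᵀ j i|) * ‖v‖ := abs_dotProduct_le_sum_abs_mul_norm _ _
    _ ≤ ∑ i, |Uᵀ j i| := mul_le_of_le_one_right (by positivity) hv

theorem opNormInfOne_nonneg : 0 ≤ opNormInfOne U :=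
  le_csSup (bddAbove_opNormInfOne_set U) ⟨0, by simp, by simp⟩

theorem sum_abs_transpose_mulVec_le (p : Fin d → ℝ) :
    ∑ j, |(Uᵀ *ᵥ p) j| ≤ opNormInfOne U * ‖p‖ := by
  rcases eq_or_ne p 0 with rfl | hp
  · simp
  have hp' : 0 < ‖p‖ := norm_pos_iff.mpr hp
  have hunit : ∑ j, |(Uᵀ *ᵥ (‖p‖⁻¹ • p)) j| ≤ opNormInfOne U :=
    le_csSup (bddAbove_opNormInfOne_set U)
      ⟨‖p‖⁻¹ • p, by rw [norm_smul, norm_inv, norm_norm, inv_mul_cancel₀ hp'.ne'], rfl⟩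
  simp only [mulVec_smul, Pi.smul_apply, smul_eq_mul, abs_mul, abs_inv, abs_norm,
    ← Finset.mul_sum] at hunit
  rwa [inv_mul_le_iff₀ hp', mul_comm] at hunit

theorem mulVec_dotProduct_eq_of_transpose_mul_self (hU : Uᵀ * U = 1) (z : Fin k → ℝ)
    (w : Fin d → ℝ) : (U *ᵥ z) ⬝ᵥ w = (Uᵀ *ᵥ (U *ᵥ z)) ⬝ᵥ (Uᵀ *ᵥ w) := by
  rw [mulVec_mulVec, hU, one_mulVec, dotProduct_mulVec, vecMul_transpose]

end Matrix

theorem sum_mul_mul_eq_mul_dotProduct {ι : Type*} [Fintype ι] (y : ℝ) (a w : ι → ℝ) :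
    ∑ i, y * a i * w i = y * (a ⬝ᵥ w) := by
  simp only [dotProduct, Finset.mul_sum, mul_assoc]

theorem margin_le_of_subspace_adv_general {d k : ℕ}
    (U : Matrix (Fin d) (Fin k) ℝ) (hU : Uᵀ * U = 1)
    (w : Fin d → ℝ) (ε : ℝ)
    (x : Fin d → ℝ) (y : ℝ) (hy : y = 1 ∨ y = -1)
    (δ : Fin d → ℝ) (hδ : ‖U.mulVec (Uᵀ.mulVec δ)‖ ≤ ε)
    (hadv : ∑ i, y * (x i + U.mulVec (Uᵀ.mulVec δ) i) * w i ≤ 0) :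
    ∑ i, y * x i * w i ≤ (k : ℝ) * opNormInfOne U * ‖Uᵀ.mulVec w‖ * ε := by
  set p := U *ᵥ (Uᵀ *ᵥ δ)
  set q := Uᵀ *ᵥ w
  have hmargin : y * (x ⬝ᵥ w) ≤ -(y * (p ⬝ᵥ w)) := by
    have h := (sum_mul_mul_eq_mul_dotProduct y (x + p) w).symm.trans_le hadv
    rw [add_dotProduct] at h
    linarith
  have hy_abs : |y| = 1 := by rcases hy with rfl | rfl <;> norm_num
  have hp_coords : p ⬝ᵥ w = (Uᵀ *ᵥ p) ⬝ᵥ q := U.mulVec_dotProduct_eq_of_transpose_mul_self hU _ w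
  have hUp : ∑ j, |(Uᵀ *ᵥ p) j| ≤ opNormInfOne U * ε :=
    (U.sum_abs_transpose_mulVec_le p).trans (by gcongr; exact U.opNormInfOne_nonneg)
  calc ∑ i, y * x i * w i = y * (x ⬝ᵥ w) := sum_mul_mul_eq_mul_dotProduct y x w
    _ ≤ |y * (p ⬝ᵥ w)| := hmargin.trans (neg_le_abs _)
    _ = |(Uᵀ *ᵥ p) ⬝ᵥ q| := by rw [abs_mul, hy_abs, one_mul, hp_coords]
    _ ≤ (∑ j, |(Uᵀ *ᵥ p) j|) * ‖q‖ := abs_dotProduct_le_sum_abs_mul_norm _ _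
    _ ≤ opNormInfOne U * ε * (k * ‖q‖) := by
        gcongr
        · exact mul_nonneg U.opNormInfOne_nonneg ((norm_nonneg p).trans hδ)
        · simpa using norm_le_card_mul_norm q
    _ = k * opNormInfOne U * ‖q‖ * ε := by ring

/-- Deterministic core of the subspace-attack bound: a successful ℓ∞-bounded
perturbation in the column space of `U` forces a small original margin. -/
theorem margin_le_of_subspace_adv {d k : ℕ}
    (U : Matrix (Fin d) (Fin k) ℝ) (hU : Uᵀ * U = 1)
    (w : Fin d → ℝ) (ε : ℝ) (hε : 0 < ε)
    (x : Fin d → ℝ) (y : ℝ) (hy : y = 1 ∨ y = -1)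
    (δ : Fin d → ℝ) (hδ : ‖U.mulVec (Uᵀ.mulVec δ)‖ ≤ ε)
    (hadv : ∑ i, y * (x i + U.mulVec (Uᵀ.mulVec δ) i) * w i ≤ 0) :
    ∑ i, y * x i * w i ≤ (k : ℝ) * opNormInfOne U * ‖Uᵀ.mulVec w‖ * ε :=
  margin_le_of_subspace_adv_general U hU w ε x y hy δ hδ hadv
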